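/- arXiv:2205.13577 — 2 statements merged into one kernel-verified Lean document; each statement's English description precedes it below -/
import Mathlib

section
/- Let $\hat P$ be a probability measure on $\mathcal{X}\times[K]$, $\hat Q$ a probability measure on $\mathcal{X}$, $T:\mathcal{X}\to\mathbb{R}^p$ bounded measurable, and $\hat\eta:\mathcal{X}\to(0,1)^K$ measurable with $\sum_k\hat\eta_k(x)=1$; assume $O$ and $N$ are finite everywhere. Then the supremum of $O(\theta,\alpha)$ over the constraint set $\{(\theta,\alpha): N(\theta,\alpha)=1\}$ equals the supremum over all $(\theta,\alpha')\in\mathbb{R}^{Kp}\times\mathbb{R}^K$ of $O(\theta,\alpha')-\log N(\theta,\alpha')$. Moreover, if $(\hat\theta,\hat\alpha')$ maximizes the unconstrained objective $(\theta,\alpha')\mapsto O(\theta,\alpha')-\log N(\theta,\alpha')$, then the pair $(\hat\theta,\hat\alpha)$ with $\hat\alpha_k=\hat\alpha'_k-\log N(\hat\theta,\hat\alpha')$ satisfies $N(\hat\theta,\hat\alpha)=1$ and maximizes $O(\theta,\alpha)$ over the constraint set $\{(\theta,\alpha):N(\theta,\alpha)=1\}$. -/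
open MeasureTheory Real
open scoped RealInnerProductSpace BigOperators

/-- the constrained distribution-matching problem is equivalent to the
unconstrained problem with a log-normalizer correction (Lemma 3.1, ExTRA). -/
theorem constrained_unconstrained_distribution_matching (d K p : ℕ) (hK : 1 ≤ K)
    (𝒳 : Set (EuclideanSpace ℝ (Fin d))) (hX : MeasurableSet 𝒳)
    (Phat : Measure (𝒳 × Fin K)) [IsProbabilityMeasure Phat]
    (Qhat : Measure 𝒳) [IsProbabilityMeasure Qhat]
    (T : 𝒳 → EuclideanSpace ℝ (Fin p)) (hTmeas : Measurable T)
    (C : ℝ) (hTbdd : ∀ x, ‖T x‖ ≤ C)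
    (η : 𝒳 → Fin K → ℝ) (hηmeas : ∀ k, Measurable fun x => η x k)
    (hηmem : ∀ x k, η x k ∈ Set.Ioo (0 : ℝ) 1)
    (hηsum : ∀ x, ∑ k, η x k = 1)
    (O N : (Fin K → EuclideanSpace ℝ (Fin p)) → (Fin K → ℝ) → ℝ)
    (hO : ∀ θ α, O θ α
      = ∫ x, Real.log (∑ k, η x k * Real.exp (⟪θ k, T x⟫ + α k)) ∂Qhat)
    (hN : ∀ θ α, N θ α
      = ∫ z : 𝒳 × Fin K, Real.exp (⟪θ z.2, T z.1⟫ + α z.2) ∂Phat)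
    (hOfin : ∀ (θ : Fin K → EuclideanSpace ℝ (Fin p)) (α : Fin K → ℝ), Integrable
      (fun x => Real.log (∑ k, η x k * Real.exp (⟪θ k, T x⟫ + α k))) Qhat)
    (hNfin : ∀ (θ : Fin K → EuclideanSpace ℝ (Fin p)) (α : Fin K → ℝ), Integrable
      (fun z : 𝒳 × Fin K => Real.exp (⟪θ z.2, T z.1⟫ + α z.2)) Phat) :
    -- the two suprema coincide
    (sSup {y : ℝ | ∃ θ α, N θ α = 1 ∧ y = O θ α}
      = sSup {y : ℝ | ∃ θ α', y = O θ α' - Real.log (N θ α')}) ∧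
    -- any maximizer of the unconstrained objective yields, after recentering,
    -- a feasible maximizer of the constrained problem
    (∀ θhat αhat',
      (∀ θ α', O θ α' - Real.log (N θ α')
        ≤ O θhat αhat' - Real.log (N θhat αhat')) →
      N θhat (fun k => αhat' k - Real.log (N θhat αhat')) = 1 ∧
      ∀ θ α, N θ α = 1 →
        O θ α ≤ O θhat (fun k => αhat' k - Real.log (N θhat αhat'))) := by
  haveI : NeZero K := ⟨by omega⟩
  have hsumpos : ∀ (θ : Fin K → EuclideanSpace ℝ (Fin p)) (α : Fin K → ℝ) (x : 𝒳),
      0 < ∑ k, η x k * Real.exp (⟪θ k, T x⟫ + α k) := by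
    intro θ α x
    refine Finset.sum_pos (fun k _ => mul_pos (hηmem x k).1 (Real.exp_pos _)) ?_
    exact Finset.univ_nonempty
  have hNpos : ∀ θ α, 0 < N θ α := by
    intro θ α
    rw [hN]
    rw [integral_pos_iff_support_of_nonneg
      (f := fun z : 𝒳 × Fin K => Real.exp (⟪θ z.2, T z.1⟫ + α z.2))
      (fun z => (Real.exp_pos _).le) (hNfin θ α)]
    have hs : Function.support
        (fun z : 𝒳 × Fin K => Real.exp (⟪θ z.2, T z.1⟫ + α z.2)) = Set.univ := by
      ext z; simp [Function.mem_support, (Real.exp_pos _).ne']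
    rw [hs]
    simp
  have hOshift : ∀ θ α (c : ℝ), O θ (fun k => α k + c) = O θ α + c := by
    intro θ α c
    rw [hO, hO]
    have heq : ∀ x : 𝒳, Real.log (∑ k, η x k * Real.exp (⟪θ k, T x⟫ + (α k + c)))
        = Real.log (∑ k, η x k * Real.exp (⟪θ k, T x⟫ + α k)) + c := by
      intro x
      have hsum : (∑ k, η x k * Real.exp (⟪θ k, T x⟫ + (α k + c)))
          = (∑ k, η x k * Real.exp (⟪θ k, T x⟫ + α k)) * Real.exp c := by
        rw [Finset.sum_mul]
        refine Finset.sum_congr rfl fun k _ => ?_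
        rw [← add_assoc, Real.exp_add, mul_assoc]
      rw [hsum, Real.log_mul (hsumpos θ α x).ne' (Real.exp_pos c).ne', Real.log_exp]
    simp_rw [heq]
    rw [integral_add (hOfin θ α) (integrable_const c), integral_const]
    simp
  have hNshift : ∀ θ α (c : ℝ), N θ (fun k => α k + c) = N θ α * Real.exp c := by
    intro θ α c
    rw [hN, hN]
    simp_rw [← add_assoc, Real.exp_add]
    rw [integral_mul_const]
  have hrecenter : ∀ θ α', N θ (fun k => α' k - Real.log (N θ α')) = 1 ∧
      O θ (fun k => α' k - Real.log (N θ α')) = O θ α' - Real.log (N θ α') := by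
    intro θ α'
    have h1 : (fun k => α' k - Real.log (N θ α'))
        = fun k => α' k + (-(Real.log (N θ α'))) := by
      funext k; ring
    rw [h1, hNshift, hOshift, Real.exp_neg, Real.exp_log (hNpos θ α')]
    constructor
    · field_simp [(hNpos θ α').ne']
    · ring
  constructor
  · congr 1
    ext y
    constructor
    · rintro ⟨θ, α, hN1, rfl⟩
      exact ⟨θ, α, by rw [hN1, Real.log_one, sub_zero]⟩
    · rintro ⟨θ, α', rfl⟩
      exact ⟨θ, _, (hrecenter θ α').1, (hrecenter θ α').2.symm⟩
  · intro θhat αhat' hmax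
    refine ⟨(hrecenter θhat αhat').1, fun θ α hNa => ?_⟩
    have h := hmax θ α
    rw [hNa, Real.log_one, sub_zero] at h
    rw [(hrecenter θhat αhat').2]
    exact h
end

section
/- (Non-identifiability under label switching.) Let $\phi$ be the standard multivariate normal density on $\mathbb{R}^p$, let $\pi_1,\dots,\pi_K\in(0,1)$, let $\mu_{P,1},\dots,\mu_{P,K}$ and $\mu_{Q,1},\dots,\mu_{Q,K}$ be vectors in $\mathbb{R}^p$, and let $\sigma:[K]\to[K]$ be a permutation satisfying $\pi_{\sigma(k)}=\pi_k$ for all $k$. Then for every $x\in\mathbb{R}^p$, $\sum_{k=1}^K\pi_k\phi(x-\mu_{P,k})\exp\big((\mu_{Q,k}-\mu_{P,k})^\top x+\tfrac12\|\mu_{P,k}\|_2^2-\tfrac12\|\mu_{Q,k}\|_2^2\big)=\sum_{k=1}^K\pi_k\phi(x-\mu_{P,k})\exp\big((\mu_{Q,\sigma(k)}-\mu_{P,k})^\top x+\tfrac12\|\mu_{P,k}\|_2^2-\tfrac12\|\mu_{Q,\sigma(k)}\|_2^2\big)$; i.e., the permuted tilt parameters produce the same marginal input density, so the exponential tilt model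 is not identifiable in this Gaussian LDA instance. -/
open Real
open scoped RealInnerProductSpace BigOperators

lemma tilt_key (p : ℕ) (φ : EuclideanSpace ℝ (Fin p) → ℝ)
    (hφ : ∀ z, φ z = (2 * π) ^ (-(p : ℝ) / 2) * Real.exp (-‖z‖ ^ 2 / 2))
    (c : ℝ) (μ ν x : EuclideanSpace ℝ (Fin p)) :
    c * φ (x - μ) * Real.exp (⟪ν - μ, x⟫ + ‖μ‖ ^ 2 / 2 - ‖ν‖ ^ 2 / 2)
      = c * ((2 * π) ^ (-(p : ℝ) / 2) * Real.exp (-‖x - ν‖ ^ 2 / 2)) := by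
  rw [hφ]
  have : Real.exp (-‖x - μ‖ ^ 2 / 2) *
      Real.exp (⟪ν - μ, x⟫ + ‖μ‖ ^ 2 / 2 - ‖ν‖ ^ 2 / 2)
      = Real.exp (-‖x - ν‖ ^ 2 / 2) := by
    rw [← Real.exp_add]
    congr 1
    rw [inner_sub_left, norm_sub_sq_real x μ, norm_sub_sq_real x ν,
      real_inner_comm ν x, real_inner_comm μ x]
    ring
  calc c * ((2 * π) ^ (-(p : ℝ) / 2) * Real.exp (-‖x - μ‖ ^ 2 / 2)) *
        Real.exp (⟪ν - μ, x⟫ + ‖μ‖ ^ 2 / 2 - ‖ν‖ ^ 2 / 2)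
      = c * ((2 * π) ^ (-(p : ℝ) / 2) * (Real.exp (-‖x - μ‖ ^ 2 / 2) *
        Real.exp (⟪ν - μ, x⟫ + ‖μ‖ ^ 2 / 2 - ‖ν‖ ^ 2 / 2))) := by ring
    _ = _ := by rw [this]

/-- non-identifiability of the exponential tilt model under label
switching in the Gaussian LDA instance. -/
theorem exponential_tilt_label_switching (p K : ℕ)
    (φ : EuclideanSpace ℝ (Fin p) → ℝ)
    (hφ : ∀ z, φ z = (2 * π) ^ (-(p : ℝ) / 2) * Real.exp (-‖z‖ ^ 2 / 2))
    (πk : Fin K → ℝ) (hπ : ∀ k, πk k ∈ Set.Ioo (0 : ℝ) 1)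
    (μP μQ : Fin K → EuclideanSpace ℝ (Fin p))
    (σ : Equiv.Perm (Fin K)) (hσ : ∀ k, πk (σ k) = πk k)
    (x : EuclideanSpace ℝ (Fin p)) :
    ∑ k, πk k * φ (x - μP k) *
        Real.exp (⟪μQ k - μP k, x⟫ + ‖μP k‖ ^ 2 / 2 - ‖μQ k‖ ^ 2 / 2)
      = ∑ k, πk k * φ (x - μP k) *
        Real.exp (⟪μQ (σ k) - μP k, x⟫ + ‖μP k‖ ^ 2 / 2 - ‖μQ (σ k)‖ ^ 2 / 2) := by
  have h1 : ∀ k, πk k * φ (x - μP k) *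
      Real.exp (⟪μQ k - μP k, x⟫ + ‖μP k‖ ^ 2 / 2 - ‖μQ k‖ ^ 2 / 2)
      = πk k * ((2 * π) ^ (-(p : ℝ) / 2) * Real.exp (-‖x - μQ k‖ ^ 2 / 2)) :=
    fun k => tilt_key p φ hφ _ _ _ _
  have h2 : ∀ k, πk k * φ (x - μP k) *
      Real.exp (⟪μQ (σ k) - μP k, x⟫ + ‖μP k‖ ^ 2 / 2 - ‖μQ (σ k)‖ ^ 2 / 2)
      = πk (σ k) * ((2 * π) ^ (-(p : ℝ) / 2) * Real.exp (-‖x - μQ (σ k)‖ ^ 2 / 2)) := by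
    intro k
    rw [hσ]
    exact tilt_key p φ hφ _ _ _ _
  simp only [h1, h2]
  exact (Equiv.sum_comp σ fun k => πk k *
    ((2 * π) ^ (-(p : ℝ) / 2) * Real.exp (-‖x - μQ k‖ ^ 2 / 2))).symm
end
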